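/- For every odd natural number k ≥ 3 there exists a finite simple graph G with Δ(G) = k, χ(G) = (k + 1)/2, vs_χ(G) = 2, and ivs_χ(G) = 3; in particular, the equality vs_χ = ivs_χ can fail for graphs with χ(G) = (Δ(G) + 1)/2. -/

import Mathlib

open SimpleGraph

/-- The chromatic number of a graph, as a natural number (for finite graphs this
is the usual chromatic number). -/
noncomputable def chromNum {V : Type*} (G : SimpleGraph V) : ℕ :=
  sInf {n : ℕ | G.Colorable n}

/-- The maximum degree Δ(G) of a finite graph. -/
noncomputable def maxDeg {V : Type*} [Fintype V] (G : SimpleGraph V) : ℕ :=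
  Finset.univ.sup fun v => Nat.card (G.neighborSet v)

/-- The chromatic vertex stability number: the minimum number of vertices whose
deletion results in a graph with chromatic number χ(G) − 1. -/
noncomputable def vsChi {V : Type*} [Fintype V] (G : SimpleGraph V) : ℕ :=
  sInf {k : ℕ | ∃ S : Finset V, S.card = k ∧
    chromNum (G.induce ((S : Set V))ᶜ) = chromNum G - 1}

/-- The independent chromatic vertex stability number: the minimum size of an
independent set of vertices whose deletion results in a graph with chromatic
number χ(G) − 1. -/
noncomputable def ivsChi {V : Type*} [Fintype V] (G : SimpleGraph V) : ℕ :=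
  sInf {k : ℕ | ∃ S : Finset V, S.card = k ∧
    (∀ u ∈ S, ∀ v ∈ S, ¬ G.Adj u v) ∧
    chromNum (G.induce ((S : Set V))ᶜ) = chromNum G - 1}

/-- The chromatic edge stability number: the minimum number of edges whose
deletion results in a graph with chromatic number χ(G) − 1. -/
noncomputable def esChi {V : Type*} (G : SimpleGraph V) : ℕ :=
  sInf {k : ℕ | ∃ F : Finset (Sym2 V), ↑F ⊆ G.edgeSet ∧ F.card = k ∧
    chromNum (G.deleteEdges ↑F) = chromNum G - 1}

/-!
Write `k = 2t + 1` and take two adjacent hubs, each joined to two disjoint `t`-cliques (its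
blocks). A hub has degree `2t + 1`, a block vertex degree `t`, and a hub with one of its blocks
is a `(t + 1)`-clique; there are four of these. Colouring each block by position and both hubs
alike leaves only edges at the hubs monochromatic, so deleting both hubs, or the independent set
made of one hub and one vertex from each block of the other hub, gives a `t`-colourable graph.
Conversely, an independent set meeting all four cliques misses some hub, so it needs a vertex in
each of that hub's blocks and one more on the other side: at least three vertices. Sets of at
most one vertex are independent, which gives the bound for `vs_χ`.
-/

namespace SimpleGraph

variable {V W : Type*} {G : SimpleGraph V} {G' : SimpleGraph W}

lemma chromNum_eq_of_colorable {m : ℕ} (h : G.Colorable m)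
    (hmin : ∀ n, G.Colorable n → m ≤ n) : chromNum G = m :=
  le_antisymm (Nat.sInf_le h) (hmin _ (Nat.sInf_mem (s := {n | G.Colorable n}) ⟨m, h⟩))

lemma Colorable.card_le_of_pairwise_adj_induce {s : Set V} {n : ℕ}
    (h : (G.induce s).Colorable n) {ι : Type*} (f : ι → V)
    (hf : Pairwise fun a b => G.Adj (f a) (f b)) (hfs : ∀ a, f a ∈ s) :
    Nat.card ι ≤ n :=
  h.card_le_of_pairwise_adj (fun a => ⟨f a, hfs a⟩) hf

lemma colorable_induce_compl_of_cover {n : ℕ} (f : V → Fin n) {S : Set V}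
    (hS : ∀ x y, G.Adj x y → f x = f y → x ∈ S ∨ y ∈ S) : (G.induce Sᶜ).Colorable n :=
  ⟨Coloring.mk (fun x => f x) fun {x y} hxy hf => (hS x y hxy hf).elim x.2 y.2⟩

lemma forall_not_adj_of_card_le_one {S : Finset V} (h : S.card ≤ 1) :
    ∀ u ∈ S, ∀ v ∈ S, ¬ G.Adj u v := by
  intro u hu v hv
  rw [Finset.card_le_one.mp h u hu v hv]
  exact G.irrefl

lemma chromNum_congr (e : G ≃g G') : chromNum G = chromNum G' := by
  simp only [chromNum, colorable_congr e]

lemma chromNum_induce_compl_map (e : G ≃g G') (S : Finset V) :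
    chromNum (G'.induce (↑(S.map e.toEquiv.toEmbedding))ᶜ) = chromNum (G.induce (↑S)ᶜ) := by
  refine (chromNum_congr (e.induce ?_)).symm
  rw [Finset.coe_map]
  change Set.BijOn e (↑S)ᶜ (e '' ↑S)ᶜ
  rw [← Set.image_compl_eq e.bijective]
  exact e.toEquiv.bijOn_image

lemma forall_not_adj_map (e : G ≃g G') {S : Finset V} (hS : ∀ u ∈ S, ∀ v ∈ S, ¬ G.Adj u v) :
    ∀ u ∈ S.map e.toEquiv.toEmbedding, ∀ v ∈ S.map e.toEquiv.toEmbedding, ¬ G'.Adj u v := by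
  simp only [Finset.mem_map]
  rintro _ ⟨u, hu, rfl⟩ _ ⟨v, hv, rfl⟩
  exact e.map_adj_iff.not.mpr (hS u hu v hv)

variable [Fintype V] [Fintype W]

lemma maxDeg_congr (e : G ≃g G') : maxDeg G = maxDeg G' := by
  rw [maxDeg, maxDeg, ← Finset.map_univ_equiv e.toEquiv, Finset.sup_map]
  exact Finset.sup_congr rfl fun v _ => Nat.card_congr (e.mapNeighborSet v)

lemma vsChi_congr (e : G ≃g G') : vsChi G = vsChi G' := by
  unfold vsChi
  congr 1
  ext k
  constructor
  · rintro ⟨S, rfl, hS⟩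
    refine ⟨S.map e.toEquiv.toEmbedding, Finset.card_map _, ?_⟩
    rwa [chromNum_induce_compl_map, ← chromNum_congr e]
  · rintro ⟨S, rfl, hS⟩
    refine ⟨S.map e.symm.toEquiv.toEmbedding, Finset.card_map _, ?_⟩
    rwa [chromNum_induce_compl_map, chromNum_congr e]

lemma ivsChi_congr (e : G ≃g G') : ivsChi G = ivsChi G' := by
  unfold ivsChi
  congr 1
  ext k
  constructor
  · rintro ⟨S, rfl, hind, hS⟩
    refine ⟨S.map e.toEquiv.toEmbedding, Finset.card_map _, forall_not_adj_map e hind, ?_⟩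
    rwa [chromNum_induce_compl_map, ← chromNum_congr e]
  · rintro ⟨S, rfl, hind, hS⟩
    refine ⟨S.map e.symm.toEquiv.toEmbedding, Finset.card_map _,
      forall_not_adj_map e.symm hind, ?_⟩
    rwa [chromNum_induce_compl_map, chromNum_congr e]

end SimpleGraph

/-- Vertex `(i, none)` is the hub `i`; vertex `(i, some (j, m))` is the `m`-th vertex of the
`j`-th block attached to hub `i`. -/
abbrev HubVertex (t : ℕ) := Fin 2 × Option (Fin 2 × Fin t)

def hubAdj {t : ℕ} : HubVertex t → HubVertex t → Prop
  | (i, none), (i', none) => i ≠ i'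
  | (i, none), (i', some _) => i = i'
  | (i, some _), (i', none) => i = i'
  | (i, some (j, m)), (i', some (j', m')) => i = i' ∧ j = j' ∧ m ≠ m'

def hubGraph (t : ℕ) : SimpleGraph (HubVertex t) where
  Adj := hubAdj
  symm := ⟨by
    rintro ⟨i, _ | ⟨j, m⟩⟩ ⟨i', _ | ⟨j', m'⟩⟩ h <;> simp_all [hubAdj, eq_comm]⟩
  loopless := ⟨by
    rintro ⟨i, _ | ⟨j, m⟩⟩ <;> simp [hubAdj]⟩

namespace hubGraph

variable {t : ℕ}

@[simp] lemma adj_hub_hub {i i' : Fin 2} :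
    (hubGraph t).Adj (i, none) (i', none) ↔ i ≠ i' := Iff.rfl

@[simp] lemma adj_hub_block {i i' : Fin 2} {p : Fin 2 × Fin t} :
    (hubGraph t).Adj (i, none) (i', some p) ↔ i = i' := Iff.rfl

@[simp] lemma adj_block_hub {i i' : Fin 2} {p : Fin 2 × Fin t} :
    (hubGraph t).Adj (i, some p) (i', none) ↔ i = i' := Iff.rfl

@[simp] lemma adj_block_block {i i' j j' : Fin 2} {m m' : Fin t} :
    (hubGraph t).Adj (i, some (j, m)) (i', some (j', m')) ↔ i = i' ∧ j = j' ∧ m ≠ m' :=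
  Iff.rfl

lemma snd_injOn_neighborSet (v : HubVertex t) :
    Set.InjOn Prod.snd ((hubGraph t).neighborSet v) := by
  rintro ⟨i, y⟩ hy ⟨i', y'⟩ hy' (rfl : y = y')
  obtain ⟨k, _ | ⟨j, m⟩⟩ := v <;> rcases y with _ | ⟨j', m'⟩ <;>
    simp_all [mem_neighborSet]
  omega

lemma card_neighborSet_le (v : HubVertex t) :
    Nat.card ((hubGraph t).neighborSet v) ≤ 2 * t + 1 := by
  simpa [two_mul, add_comm] using
    Nat.card_le_card_of_injective _ (snd_injOn_neighborSet v).injective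

lemma card_neighborSet_hub_zero :
    Nat.card ((hubGraph t).neighborSet (0, none)) = 2 * t + 1 := by
  let f : Option (Fin 2 × Fin t) → (hubGraph t).neighborSet (0, none) :=
    fun p => p.elim ⟨(1, none), by simp⟩ fun p => ⟨(0, some p), by simp⟩
  have hf : f.Injective := by
    rintro (_ | p) (_ | p') h <;> simp_all [f]
  refine le_antisymm (card_neighborSet_le _) ?_
  simpa [two_mul, add_comm] using Nat.card_le_card_of_injective f hf

lemma maxDeg_eq : maxDeg (hubGraph t) = 2 * t + 1 :=
  le_antisymm (Finset.sup_le fun v _ => card_neighborSet_le v)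
    (card_neighborSet_hub_zero.symm.le.trans
      (Finset.le_sup (f := fun v => Nat.card ((hubGraph t).neighborSet v))
        (Finset.mem_univ (0, none))))

def clique (i j : Fin 2) : Option (Fin t) → HubVertex t
  | none => (i, none)
  | some m => (i, some (j, m))

lemma pairwise_adj_clique (i j : Fin 2) :
    Pairwise fun a b => (hubGraph t).Adj (clique i j a) (clique i j b) := by
  rintro (_ | m) (_ | m') h <;> simp_all [clique]

lemma exists_clique_disjoint {S : Finset (HubVertex t)}
    (hS : ∀ u ∈ S, ∀ v ∈ S, ¬ (hubGraph t).Adj u v) (hcard : S.card ≤ 2) :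
    ∃ i j, ∀ a, clique i j a ∉ S := by
  by_contra! h
  obtain ⟨i, hi⟩ : ∃ i : Fin 2, (i, none) ∉ S := by
    by_contra! hhubs
    exact hS _ (hhubs 0) _ (hhubs 1) (by simp)
  have hblock (j : Fin 2) : ∃ m, (i, some (j, m)) ∈ S := by
    obtain ⟨_ | m, hm⟩ := h i j
    · exact absurd hm hi
    · exact ⟨m, hm⟩
  obtain ⟨m₀, h₀⟩ := hblock 0
  obtain ⟨m₁, h₁⟩ := hblock 1
  obtain ⟨i', hi'⟩ := exists_ne i
  obtain ⟨a, ha⟩ := h i' 0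
  have : 2 < S.card := Finset.two_lt_card.mpr
    ⟨_, h₀, _, h₁, _, ha, by simp, by cases a <;> simp [clique, hi'.symm],
      by cases a <;> simp [clique, hi'.symm]⟩
  omega

variable [NeZero t]

def coloring : (hubGraph t).Coloring (Fin (t + 1)) :=
  Coloring.mk
    (fun
      | (0, none) => Fin.last t
      | (1, none) => 0
      | (0, some (_, m)) => m.castSucc
      | (1, some (_, m)) => m.succ)
    (by
      rintro ⟨i, _ | ⟨j, m⟩⟩ ⟨i', _ | ⟨j', m'⟩⟩ h <;> fin_cases i <;> fin_cases i' <;>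
        simp_all [NeZero.ne, eq_comm, Fin.castSucc_ne_last, Fin.succ_ne_zero])

lemma chromNum_eq : chromNum (hubGraph t) = t + 1 := by
  refine chromNum_eq_of_colorable (by simpa using coloring.colorable) fun n hn => ?_
  simpa using hn.card_le_of_pairwise_adj (clique 0 0) (pairwise_adj_clique 0 0)

lemma chromNum_induce_compl_of_forall_not_adj {S : Finset (HubVertex t)}
    (hS : ∀ u ∈ S, ∀ v ∈ S, ¬ (hubGraph t).Adj u v) (hcard : S.card ≤ 2) :
    chromNum ((hubGraph t).induce (↑S)ᶜ) = t + 1 := by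
  refine chromNum_eq_of_colorable ?_ fun n hn => ?_
  · simpa using coloring.colorable.of_hom (Embedding.induce _).toHom
  · obtain ⟨i, j, h⟩ := exists_clique_disjoint hS hcard
    simpa using hn.card_le_of_pairwise_adj_induce (clique i j) (pairwise_adj_clique i j) h

def blockColor : HubVertex t → Fin t
  | (_, none) => 0
  | (_, some (_, m)) => m

lemma chromNum_induce_compl_of_cover {S : Finset (HubVertex t)}
    (hS : ∀ x y, (hubGraph t).Adj x y → blockColor x = blockColor y → x ∈ S ∨ y ∈ S)
    (hblock : ∀ m, (0, some (0, m)) ∉ S) :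
    chromNum ((hubGraph t).induce (↑S)ᶜ) = t := by
  refine chromNum_eq_of_colorable (colorable_induce_compl_of_cover blockColor hS)
    fun n hn => ?_
  simpa using hn.card_le_of_pairwise_adj_induce (clique 0 0 ∘ some)
    ((pairwise_adj_clique 0 0).comp_of_injective (Option.some_injective _)) hblock

variable (t) in
def hubs : Finset (HubVertex t) := {(0, none), (1, none)}

variable (t) in
def hubAndBlockHeads : Finset (HubVertex t) :=
  {(0, none), (1, some (0, 0)), (1, some (1, 0))}

lemma chromNum_induce_compl_hubs : chromNum ((hubGraph t).induce (↑(hubs t))ᶜ) = t := by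
  refine chromNum_induce_compl_of_cover ?_ (by simp [hubs])
  rintro ⟨i, _ | ⟨j, m⟩⟩ ⟨i', _ | ⟨j', m'⟩⟩ hadj hc <;> fin_cases i <;> fin_cases i' <;>
    simp_all [hubs, blockColor]

lemma chromNum_induce_compl_hubAndBlockHeads :
    chromNum ((hubGraph t).induce (↑(hubAndBlockHeads t))ᶜ) = t := by
  refine chromNum_induce_compl_of_cover ?_ (by simp [hubAndBlockHeads])
  rintro ⟨i, _ | ⟨j, m⟩⟩ ⟨i', _ | ⟨j', m'⟩⟩ hadj hc <;> fin_cases i <;> fin_cases i' <;>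
    simp_all [hubAndBlockHeads, blockColor] <;> omega

lemma vsChi_eq : vsChi (hubGraph t) = 2 := by
  rw [vsChi, chromNum_eq, Nat.add_sub_cancel]
  refine IsLeast.csInf_eq ⟨⟨hubs t, by simp [hubs], chromNum_induce_compl_hubs⟩, ?_⟩
  rintro _ ⟨S, rfl, hS⟩
  by_contra! hlt
  have := chromNum_induce_compl_of_forall_not_adj
    (forall_not_adj_of_card_le_one (by omega : S.card ≤ 1)) (by omega)
  omega

lemma ivsChi_eq : ivsChi (hubGraph t) = 3 := by
  rw [ivsChi, chromNum_eq, Nat.add_sub_cancel]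
  refine IsLeast.csInf_eq ⟨⟨hubAndBlockHeads t, by simp [hubAndBlockHeads],
    by simp [hubAndBlockHeads], chromNum_induce_compl_hubAndBlockHeads⟩, ?_⟩
  rintro _ ⟨S, rfl, hS, hchrom⟩
  by_contra! hlt
  have := chromNum_induce_compl_of_forall_not_adj hS (by omega)
  omega

end hubGraph

theorem stmt_11 (k : ℕ) (hk : 3 ≤ k) (hodd : Odd k) :
    ∃ (n : ℕ) (G : SimpleGraph (Fin n)),
      maxDeg G = k ∧ 2 * chromNum G = k + 1 ∧
      vsChi G = 2 ∧ ivsChi G = 3 := by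
  obtain ⟨t, rfl⟩ := hodd
  have : NeZero t := ⟨by omega⟩
  let e := Iso.map (Fintype.equivFin (HubVertex t)) (hubGraph t)
  refine ⟨_, _, (maxDeg_congr e).symm.trans hubGraph.maxDeg_eq, ?_,
    (vsChi_congr e).symm.trans hubGraph.vsChi_eq, (ivsChi_congr e).symm.trans hubGraph.ivsChi_eq⟩
  rw [← chromNum_congr e, hubGraph.chromNum_eq]
  ring
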